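/- Let d ≤ 3, let f : [0,1]^d → ℝ be ρ-Lipschitz in 1-norm, let t ≥ 1 be an integer, and take M = 1. Then the constructed network f̂ satisfies sup_{x ∈ [0,1]^d} |f(x) − f̂(x)| ≤ 37ρd/t. -/

import Mathlib

open Finset MeasureTheory

noncomputable section

/-- The ReLU function σ(z) = max(0, z). -/
def relu (z : ℝ) : ℝ := max 0 z

/-- `digit d t i r` is the `r`-th digit (most significant first) of the base-(t+1)
representation of `i`, i.e. the vector π^i, so that `i = Σ_r (digit d t i r) * (t+1)^(d-1-r)`. -/
def digit (d t i : ℕ) (r : Fin d) : ℕ := i / (t + 1) ^ (d - 1 - (r : ℕ)) % (t + 1)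

/-- The grid point π^i / t ∈ [0,1]^d. -/
def gridPt (d t i : ℕ) : Fin d → ℝ := fun r => (digit d t i r : ℝ) / t

/-- A g-unit with coefficient `a` located at grid point `i`:
`x ↦ a · σ(Σ_r −M·σ(−x_r + π^i_r/t) + 1/t)`. -/
def gUnit (d t : ℕ) (M a : ℝ) (i : ℕ) (x : Fin d → ℝ) : ℝ :=
  a * relu ((∑ r : Fin d, -M * relu (-(x r) + gridPt d t i r)) + 1 / t)

/-- `net d t M f i` is the partial network `b + Σ_{j=1}^{i} ĝ_j` of the recursive
construction (with `b = f 0`). -/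
def net (d t : ℕ) (M : ℝ) (f : (Fin d → ℝ) → ℝ) : ℕ → (Fin d → ℝ) → ℝ
  | 0 => fun _ => f (fun _ => 0)
  | i + 1 => fun x =>
      net d t M f i x +
        gUnit d t M ((t : ℝ) * (f (gridPt d t (i + 1)) - net d t M f i (gridPt d t (i + 1))))
          (i + 1) x

/-- The coefficient `a_i = t·(f(π^i/t) − (b + Σ_{j=1}^{i−1} ĝ_j(π^i/t)))` of the
construction (meaningful for `i ≥ 1`). -/
def coef (d t : ℕ) (M : ℝ) (f : (Fin d → ℝ) → ℝ) (i : ℕ) : ℝ :=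
  (t : ℝ) * (f (gridPt d t i) - net d t M f (i - 1) (gridPt d t i))

/-- The g-unit `ĝ_i` of the construction. -/
def gHat (d t : ℕ) (M : ℝ) (f : (Fin d → ℝ) → ℝ) (i : ℕ) : (Fin d → ℝ) → ℝ :=
  gUnit d t M (coef d t M f i) i

/-- The constructed network `f̂(x) = b + Σ_{i=1}^{k−1} ĝ_i(x)`, `k = (t+1)^d`. -/
def fHat (d t : ℕ) (M : ℝ) (f : (Fin d → ℝ) → ℝ) (x : Fin d → ℝ) : ℝ :=
  f (fun _ => 0) + ∑ i ∈ Finset.Icc 1 ((t + 1) ^ d - 1), gHat d t M f i x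

/-- `f` is ρ-Lipschitz in 1-norm on the set `s`. -/
def LipOneNorm (d : ℕ) (ρ : ℝ) (s : Set (Fin d → ℝ)) (f : (Fin d → ℝ) → ℝ) : Prop :=
  ∀ x ∈ s, ∀ x' ∈ s, |f x - f x'| ≤ ρ * ∑ r : Fin d, |x r - x' r|

def vOf (d t : ℕ) (π : Fin d → ℕ) : ℕ := ∑ r : Fin d, π r * (t + 1) ^ (d - 1 - (r : ℕ))

lemma digit_le (d t i : ℕ) (r : Fin d) : digit d t i r ≤ t :=
  Nat.lt_succ_iff.mp (Nat.mod_lt _ (Nat.succ_pos t))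

lemma sum_lt_pow (t n : ℕ) (w : ℕ → ℕ) (hw : ∀ m, m < n → w m ≤ t) :
    ∑ m ∈ range n, w m * (t + 1) ^ m < (t + 1) ^ n := by
  induction n with
  | zero => simp
  | succ n ih =>
    rw [Finset.sum_range_succ, pow_succ]
    have h1 : ∑ m ∈ range n, w m * (t + 1) ^ m < (t + 1) ^ n :=
      ih (fun m hm => hw m (hm.trans (Nat.lt_succ_self n)))
    have h2 : w n * (t + 1) ^ n ≤ t * (t + 1) ^ n :=
      Nat.mul_le_mul_right _ (hw n (Nat.lt_succ_self n))
    have h3 : (t + 1) ^ n * (t + 1) = (t + 1) ^ n + t * (t + 1) ^ n := by ring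
    omega

lemma digit_of_sum (t : ℕ) : ∀ (n : ℕ) (w : ℕ → ℕ), (∀ m, m < n → w m ≤ t) → ∀ e, e < n →
    (∑ m ∈ range n, w m * (t + 1) ^ m) / (t + 1) ^ e % (t + 1) = w e := by
  intro n
  induction n with
  | zero => intro w _ e he; omega
  | succ n ih =>
    intro w hw e he
    rw [Finset.sum_range_succ]
    have hdvd : (0:ℕ) < (t + 1) ^ e := Nat.pow_pos (Nat.succ_pos t)
    have hsmall : ∑ m ∈ range n, w m * (t + 1) ^ m < (t + 1) ^ n :=
      sum_lt_pow t n w (fun m hm => hw m (hm.trans (Nat.lt_succ_self n)))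
    rcases Nat.lt_or_ge e n with h | h
    · have hrw : w n * (t+1)^n = (t+1)^e * ((t+1) * ((t+1)^(n-e-1) * w n)) := by
        have h5 : (t+1)^e * ((t+1) * ((t+1)^(n-e-1) * w n)) = (t+1)^(e+1+(n-e-1)) * w n := by
          rw [pow_add, pow_add]; ring
        rw [h5, show e+1+(n-e-1) = n from by omega]; ring
      rw [hrw, Nat.add_mul_div_left _ _ hdvd, Nat.add_mul_mod_self_left]
      exact ih w (fun m hm => hw m (hm.trans (Nat.lt_succ_self n))) e h
    · have he' : e = n := by omega
      subst he'
      rw [mul_comm (w e), Nat.add_mul_div_left _ _ hdvd, Nat.div_eq_of_lt hsmall, Nat.zero_add,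
        Nat.mod_eq_of_lt (by have := hw e (Nat.lt_succ_self e); omega)]

lemma sum_digits_eq (t : ℕ) : ∀ (n j : ℕ), j < (t + 1) ^ n →
    ∑ m ∈ range n, (j / (t + 1) ^ m % (t + 1)) * (t + 1) ^ m = j := by
  intro n
  induction n with
  | zero =>
    intro j hj
    have : j = 0 := by simpa using hj
    subst this; simp
  | succ n ih =>
    intro j hj
    rw [Finset.sum_range_succ]
    have hpos : (0:ℕ) < (t + 1) ^ n := Nat.pow_pos (Nat.succ_pos t)
    set q := j / (t + 1) ^ n with hq
    set s := j % (t + 1) ^ n with hs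
    have hjqs : j = s + (t + 1) ^ n * q := by rw [hs, hq]; exact (Nat.mod_add_div _ _).symm
    have hslt : s < (t + 1) ^ n := Nat.mod_lt _ hpos
    have hqlt : q < t + 1 := by
      rw [hq]; rw [pow_succ] at hj; exact Nat.div_lt_of_lt_mul (by omega)
    have hterm : ∀ m, m < n → j / (t + 1) ^ m % (t + 1) = s / (t + 1) ^ m % (t + 1) := by
      intro m hm
      have hposm : (0:ℕ) < (t + 1) ^ m := Nat.pow_pos (Nat.succ_pos t)
      have h6 : (t + 1) ^ n * q = (t + 1) ^ m * ((t+1) * ((t+1)^(n-m-1) * q)) := by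
        have h5 : (t+1)^m * ((t+1) * ((t+1)^(n-m-1) * q)) = (t+1)^(m+1+(n-m-1)) * q := by
          rw [pow_add, pow_add]; ring
        rw [h5, show m+1+(n-m-1) = n from by omega]
      rw [hjqs, h6, Nat.add_mul_div_left _ _ hposm, Nat.add_mul_mod_self_left]
    have hlast : j / (t + 1) ^ n % (t + 1) = q := by
      rw [hjqs, mul_comm, Nat.add_mul_div_right _ _ hpos, Nat.div_eq_of_lt hslt, Nat.zero_add,
        Nat.mod_eq_of_lt hqlt]
    rw [Finset.sum_congr rfl (fun m hm => by rw [hterm m (Finset.mem_range.mp hm)]), hlast,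
      ih s hslt, hjqs]
    ring

lemma vOf_digit (d t j : ℕ) (hj : j < (t + 1) ^ d) : vOf d t (digit d t j) = j := by
  unfold vOf digit
  rw [Fin.sum_univ_eq_sum_range (fun r => j / (t + 1) ^ (d - 1 - r) % (t + 1) * (t + 1) ^ (d - 1 - r)) d]
  rw [show (fun r => j / (t + 1) ^ (d - 1 - r) % (t + 1) * (t + 1) ^ (d - 1 - r))
      = (fun r => (fun m => j / (t + 1) ^ m % (t + 1) * (t + 1) ^ m) (d - 1 - r)) from rfl]
  rw [Finset.sum_range_reflect (fun m => j / (t + 1) ^ m % (t + 1) * (t + 1) ^ m) d]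
  exact sum_digits_eq t d j hj

def wOf (d : ℕ) (π : Fin d → ℕ) : ℕ → ℕ := fun m => if h : m < d then π ⟨d - 1 - m, by omega⟩ else 0

lemma vOf_eq_range (d t : ℕ) (π : Fin d → ℕ) :
    vOf d t π = ∑ m ∈ range d, wOf d π m * (t + 1) ^ m := by
  classical
  unfold vOf
  have e1 : (∑ s : Fin d, π s * (t + 1) ^ (d - 1 - (s : ℕ)))
      = ∑ s : Fin d, (fun m => (if h : m < d then π ⟨m, h⟩ else 0) * (t + 1) ^ (d - 1 - m)) (s : ℕ) := by
    apply Finset.sum_congr rfl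
    intro s _
    simp only [dif_pos s.isLt, Fin.eta]
  rw [e1, Fin.sum_univ_eq_sum_range
      (fun m => (if h : m < d then π ⟨m, h⟩ else 0) * (t + 1) ^ (d - 1 - m)) d,
    ← Finset.sum_range_reflect (fun m => wOf d π m * (t + 1) ^ m) d]
  apply Finset.sum_congr rfl
  intro s hs
  have hsd : s < d := Finset.mem_range.mp hs
  have h1 : d - 1 - s < d := by omega
  have h2 : d - 1 - (d - 1 - s) = s := by omega
  unfold wOf
  simp only [dif_pos hsd, dif_pos h1, h2]

lemma wOf_le (d t : ℕ) (π : Fin d → ℕ) (hπ : ∀ r, π r ≤ t) : ∀ m, m < d → wOf d π m ≤ t := by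
  intro m hm; unfold wOf; simp only [dif_pos hm]; exact hπ _

lemma digit_vOf (d t : ℕ) (π : Fin d → ℕ) (hπ : ∀ r, π r ≤ t) (r : Fin d) :
    digit d t (vOf d t π) r = π r := by
  unfold digit
  rw [vOf_eq_range, digit_of_sum t d (wOf d π) (wOf_le d t π hπ) (d - 1 - (r : ℕ))
    (by have := r.isLt; omega)]
  have h1 : d - 1 - (r : ℕ) < d := by have := r.isLt; omega
  have h2 : d - 1 - (d - 1 - (r : ℕ)) = (r : ℕ) := by have := r.isLt; omega
  unfold wOf
  simp only [dif_pos h1, h2, Fin.eta]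

lemma vOf_lt (d t : ℕ) (π : Fin d → ℕ) (hπ : ∀ r, π r ≤ t) : vOf d t π < (t + 1) ^ d := by
  rw [vOf_eq_range]
  exact sum_lt_pow t d (wOf d π) (wOf_le d t π hπ)

lemma le_of_digit_le (d t i j : ℕ) (hj : j < (t + 1) ^ d) (hi : i < (t + 1) ^ d)
    (h : ∀ r, digit d t j r ≤ digit d t i r) : j ≤ i := by
  rw [← vOf_digit d t j hj, ← vOf_digit d t i hi]
  unfold vOf
  exact Finset.sum_le_sum (fun r _ => Nat.mul_le_mul_right _ (h r))

lemma digit_zero (d t : ℕ) (r : Fin d) : digit d t 0 r = 0 := by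
  unfold digit; simp

def phi (d t i : ℕ) (x : Fin d → ℝ) : ℝ :=
  relu ((∑ r : Fin d, -(1:ℝ) * relu (-(x r) + gridPt d t i r)) + 1 / t)

lemma gUnit_one (d t : ℕ) (a : ℝ) (i : ℕ) (x : Fin d → ℝ) :
    gUnit d t 1 a i x = a * phi d t i x := rfl

lemma relu_nonneg (z : ℝ) : 0 ≤ relu z := le_max_left _ _

lemma relu_of_nonpos {z : ℝ} (h : z ≤ 0) : relu z = 0 := max_eq_left h

lemma relu_le_of_le {z c : ℝ} (hc : 0 ≤ c) (h : z ≤ c) : relu z ≤ c := max_le hc h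

lemma phi_nonneg (d t i : ℕ) (x : Fin d → ℝ) : 0 ≤ phi d t i x := relu_nonneg _

lemma phi_le (d t i : ℕ) (x : Fin d → ℝ) : phi d t i x ≤ 1 / t := by
  unfold phi
  apply relu_le_of_le (by positivity)
  have : ∀ r : Fin d, -(1:ℝ) * relu (-(x r) + gridPt d t i r) ≤ 0 := fun r => by
    have := relu_nonneg (-(x r) + gridPt d t i r); nlinarith
  have hs : (∑ r : Fin d, -(1:ℝ) * relu (-(x r) + gridPt d t i r)) ≤ 0 :=
    Finset.sum_nonpos (fun r _ => this r)
  linarith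

lemma phi_eq_full (d t i : ℕ) (x : Fin d → ℝ) (h : ∀ r, gridPt d t i r ≤ x r) :
    phi d t i x = 1 / t := by
  unfold phi
  have : ∀ r : Fin d, -(1:ℝ) * relu (-(x r) + gridPt d t i r) = 0 := fun r => by
    rw [relu_of_nonpos (by have := h r; linarith)]; ring
  rw [Finset.sum_congr rfl (fun r _ => this r)]
  simp only [Finset.sum_const_zero, zero_add, relu]
  exact max_eq_right (by positivity)

lemma phi_eq_zero (d t i : ℕ) (x : Fin d → ℝ) (r0 : Fin d)
    (h : x r0 + 1 / t ≤ gridPt d t i r0) : phi d t i x = 0 := by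
  unfold phi
  apply relu_of_nonpos
  have h1 : (∑ r : Fin d, -(1:ℝ) * relu (-(x r) + gridPt d t i r))
      ≤ -(1:ℝ) * relu (-(x r0) + gridPt d t i r0) := by
    rw [← Finset.sum_erase_add Finset.univ _ (Finset.mem_univ r0)]
    have h0 : (∑ r ∈ Finset.univ.erase r0, -(1:ℝ) * relu (-(x r) + gridPt d t i r)) ≤ 0 :=
      Finset.sum_nonpos (fun r _ => by
        have := relu_nonneg (-(x r) + gridPt d t i r); nlinarith)
    linarith
  have h2 : (1:ℝ)/t ≤ relu (-(x r0) + gridPt d t i r0) :=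
    le_trans (by linarith) (le_max_right _ _)
  linarith

lemma net_eq (d t : ℕ) (M : ℝ) (f : (Fin d → ℝ) → ℝ) (n : ℕ) (x : Fin d → ℝ) :
    net d t M f n x = f (fun _ => 0) + ∑ j ∈ Finset.Icc 1 n, gHat d t M f j x := by
  induction n with
  | zero => simp [net]
  | succ n ih =>
    have hstep : net d t M f (n+1) x = net d t M f n x +
        gUnit d t M ((t:ℝ) * (f (gridPt d t (n + 1)) - net d t M f n (gridPt d t (n + 1))))
          (n+1) x := rfl
    have hc : coef d t M f (n+1)
        = (t:ℝ) * (f (gridPt d t (n + 1)) - net d t M f n (gridPt d t (n + 1))) := by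
      unfold coef; norm_num
    have hins : Finset.Icc 1 (n+1) = insert (n+1) (Finset.Icc 1 n) := by
      ext j; simp [Finset.mem_Icc, Finset.mem_insert]; omega
    rw [hstep, ih, hins, Finset.sum_insert (by simp)]
    unfold gHat
    rw [hc]; ring

lemma fHat_eq_net (d t : ℕ) (M : ℝ) (f : (Fin d → ℝ) → ℝ) (x : Fin d → ℝ) :
    fHat d t M f x = net d t M f ((t+1)^d - 1) x := by
  rw [net_eq]; rfl

lemma gridPt_zero (d t : ℕ) : gridPt d t 0 = fun _ => (0:ℝ) := by
  funext r; unfold gridPt; rw [digit_zero]; simp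


lemma div_le_div_of_nonneg_right' {a b c : ℝ} (h : a ≤ b) (hc : 0 ≤ c := by positivity) :
    a / c ≤ b / c := by
  rcases eq_or_lt_of_le hc with hc0 | hc0
  · rw [← hc0]; simp
  · rw [div_le_div_iff₀ hc0 hc0]
    nlinarith

lemma grid_le (d t : ℕ) {i j : ℕ} {r : Fin d} (h : digit d t j r ≤ digit d t i r) :
    gridPt d t j r ≤ gridPt d t i r := by
  unfold gridPt
  have hc : (digit d t j r : ℝ) ≤ (digit d t i r : ℝ) := by exact_mod_cast h
  exact div_le_div_of_nonneg_right' hc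

lemma grid_gap (d t : ℕ) (ht : 1 ≤ t) {i j : ℕ} {r : Fin d} (h : digit d t i r < digit d t j r) :
    gridPt d t i r + 1 / t ≤ gridPt d t j r := by
  have htp : (0:ℝ) < t := by exact_mod_cast ht
  unfold gridPt
  rw [← add_div]
  have hc : (digit d t i r : ℝ) + 1 ≤ (digit d t j r : ℝ) := by exact_mod_cast h
  exact div_le_div_of_nonneg_right' hc

lemma interp (d t : ℕ) (ht : 1 ≤ t) (f : (Fin d → ℝ) → ℝ) (i : ℕ) (hi : i < (t+1)^d) :
    fHat d t 1 f (gridPt d t i) = f (gridPt d t i) := by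
  have htp : (0:ℝ) < t := by exact_mod_cast ht
  have hzero : ∀ j, i < j → j < (t+1)^d → gHat d t 1 f j (gridPt d t i) = 0 := by
    intro j hij hjk
    have hnot : ¬ ∀ r, digit d t j r ≤ digit d t i r := fun h =>
      absurd (le_of_digit_le d t i j hjk hi h) (by omega)
    push_neg at hnot
    obtain ⟨r0, hr0⟩ := hnot
    have hg : gridPt d t i r0 + 1/t ≤ gridPt d t j r0 := grid_gap d t ht hr0
    unfold gHat
    rw [gUnit_one, phi_eq_zero d t j _ r0 hg, mul_zero]
  have hself : net d t 1 f i (gridPt d t i) = f (gridPt d t i) := by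
    cases i with
    | zero =>
      rw [show net d t 1 f 0 = fun _ => f (fun _ => 0) from rfl, gridPt_zero]
    | succ m =>
      have hstep : net d t 1 f (m+1) (gridPt d t (m+1)) = net d t 1 f m (gridPt d t (m+1)) +
          gUnit d t 1 ((t:ℝ) * (f (gridPt d t (m + 1)) - net d t 1 f m (gridPt d t (m + 1))))
            (m+1) (gridPt d t (m+1)) := rfl
      rw [hstep, gUnit_one, phi_eq_full d t (m+1) _ (fun r => le_refl _)]
      field_simp
      ring
  rw [fHat_eq_net, net_eq]
  have hk : 1 ≤ (t+1)^d := Nat.one_le_pow d (t+1) (by omega)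
  have hsplit : Finset.Icc 1 ((t+1)^d - 1)
      = Finset.Icc 1 i ∪ Finset.Icc (i+1) ((t+1)^d - 1) := by
    ext j; simp only [Finset.mem_Icc, Finset.mem_union]; omega
  have hdisj : Disjoint (Finset.Icc 1 i) (Finset.Icc (i+1) ((t+1)^d - 1)) := by
    simp only [Finset.disjoint_left, Finset.mem_Icc]; omega
  rw [hsplit, Finset.sum_union hdisj]
  have h2 : (∑ j ∈ Finset.Icc (i+1) ((t+1)^d - 1), gHat d t 1 f j (gridPt d t i)) = 0 :=
    Finset.sum_eq_zero (fun j hj => by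
      have := Finset.mem_Icc.mp hj
      exact hzero j (by omega) (by omega))
  rw [h2, add_zero, ← net_eq]
  exact hself

lemma coef_zero (d t : ℕ) (M : ℝ) (f : (Fin d → ℝ) → ℝ) : coef d t M f 0 = 0 := by
  unfold coef
  rw [show (0:ℕ) - 1 = 0 from rfl, show net d t M f 0 = fun _ => f (fun _ => 0) from rfl,
    gridPt_zero]
  simp

lemma lattice (d t : ℕ) (ht : 1 ≤ t) (f : (Fin d → ℝ) → ℝ) (σ : Fin d → ℕ)
    (hσ : ∀ r, σ r ≤ t) :
    ∑ j ∈ (Finset.range ((t+1)^d)).filter (fun j => ∀ r, digit d t j r ≤ σ r),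
        coef d t 1 f j
      = t * (f (gridPt d t (vOf d t σ)) - f (fun _ => 0)) := by
  have htp : (0:ℝ) < t := by exact_mod_cast ht
  have hk : 1 ≤ (t+1)^d := Nat.one_le_pow d (t+1) (by omega)
  set i := vOf d t σ with hidef
  have hi : i < (t+1)^d := vOf_lt d t σ hσ
  have hdig : ∀ r, digit d t i r = σ r := digit_vOf d t σ hσ
  have hinterp := interp d t ht f i hi
  rw [show fHat d t 1 f (gridPt d t i) = f (fun _ => 0) +
      ∑ j ∈ Finset.Icc 1 ((t+1)^d - 1), gHat d t 1 f j (gridPt d t i) from rfl] at hinterp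
  have hterm : ∀ j, gHat d t 1 f j (gridPt d t i)
      = if ∀ r, digit d t j r ≤ σ r then coef d t 1 f j * (1/t) else 0 := by
    intro j
    by_cases hc : ∀ r, digit d t j r ≤ σ r
    · rw [if_pos hc]
      unfold gHat
      rw [gUnit_one, phi_eq_full d t j _ (fun r => grid_le d t (by rw [hdig]; exact hc r))]
    · rw [if_neg hc]
      push_neg at hc
      obtain ⟨r0, hr0⟩ := hc
      unfold gHat
      rw [gUnit_one, phi_eq_zero d t j _ r0 (grid_gap d t ht (by rw [hdig]; omega)), mul_zero]
  have hrange : Finset.range ((t+1)^d) = insert 0 (Finset.Icc 1 ((t+1)^d - 1)) := by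
    ext j; simp only [Finset.mem_range, Finset.mem_insert, Finset.mem_Icc]; omega
  have hsum : (∑ j ∈ Finset.range ((t+1)^d),
      if ∀ r, digit d t j r ≤ σ r then coef d t 1 f j * (1/t) else 0)
      = ∑ j ∈ Finset.Icc 1 ((t+1)^d - 1), gHat d t 1 f j (gridPt d t i) := by
    rw [hrange, Finset.sum_insert (by simp)]
    rw [Finset.sum_congr rfl (fun j _ => (hterm j).symm)]
    rw [coef_zero]
    simp
  have key : (∑ j ∈ (Finset.range ((t+1)^d)).filter (fun j => ∀ r, digit d t j r ≤ σ r),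
      coef d t 1 f j) * (1/t) = f (gridPt d t i) - f (fun _ => 0) := by
    rw [Finset.sum_mul, Finset.sum_filter, hsum]
    linarith
  have htne : (t:ℝ) ≠ 0 := ne_of_gt htp
  field_simp at key
  linarith



lemma gridPt_mem (d t : ℕ) (ht : 1 ≤ t) (i : ℕ) :
    gridPt d t i ∈ Set.Icc (0 : Fin d → ℝ) 1 := by
  have htp : (0:ℝ) < t := by exact_mod_cast ht
  rw [Set.mem_Icc]
  constructor <;> (rw [Pi.le_def]; intro r)
  · rw [Pi.zero_apply]; unfold gridPt; positivity
  · rw [Pi.one_apply]; unfold gridPt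
    rw [div_le_one htp]
    exact_mod_cast digit_le d t i r

lemma neg_one_pow_powerset {d : ℕ} (E : Finset (Fin d)) :
    (∑ ε ∈ E.powerset, (-1 : ℝ) ^ ε.card) = if E = ∅ then 1 else 0 := by
  have h : (∑ ε ∈ E.powerset, (-1 : ℤ) ^ ε.card) = if E = ∅ then 1 else 0 :=
    Finset.sum_powerset_neg_one_pow_card
  have h2 : ((∑ ε ∈ E.powerset, (-1 : ℤ) ^ ε.card : ℤ) : ℝ)
      = ∑ ε ∈ E.powerset, (-1 : ℝ) ^ ε.card := by push_cast; rfl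
  rw [← h2, h]
  split_ifs <;> simp

lemma keyL (d t : ℕ) (ht : 1 ≤ t) (ρ : ℝ) (hρ : 0 ≤ ρ) (f : (Fin d → ℝ) → ℝ)
    (hf : LipOneNorm d ρ (Set.Icc 0 1) f) (σ : Fin d → ℕ) (hσ : ∀ r, σ r ≤ t)
    (E : Finset (Fin d)) (hE : E.Nonempty) (hσ1 : ∀ r ∈ E, 1 ≤ σ r) :
    |∑ j ∈ (Finset.range ((t+1)^d)).filter
        (fun j => (∀ r, digit d t j r ≤ σ r) ∧ ∀ r ∈ E, digit d t j r = σ r),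
      coef d t 1 f j| ≤ 2^(d-1) * ρ := by
  classical
  have htp : (0:ℝ) < t := by exact_mod_cast ht
  set σε : Finset (Fin d) → (Fin d → ℕ) := fun ε r => σ r - (if r ∈ ε then 1 else 0) with hσε
  have hσεle : ∀ ε, ∀ r, σε ε r ≤ t := fun ε r => le_trans (Nat.sub_le _ _) (hσ r)
  set h : Finset (Fin d) → ℝ :=
    fun ε => (t:ℝ) * (f (gridPt d t (vOf d t (σε ε))) - f (fun _ => 0)) with hh
  -- Step 1: inclusion-exclusion identity
  have hid : (∑ j ∈ (Finset.range ((t+1)^d)).filter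
        (fun j => (∀ r, digit d t j r ≤ σ r) ∧ ∀ r ∈ E, digit d t j r = σ r),
      coef d t 1 f j) = ∑ ε ∈ E.powerset, (-1:ℝ)^ε.card * h ε := by
    have hlat : ∀ ε, h ε = ∑ j ∈ Finset.range ((t+1)^d),
        if ∀ r, digit d t j r ≤ σε ε r then coef d t 1 f j else 0 := by
      intro ε
      simp only [hh]
      rw [← lattice d t ht f (σε ε) (hσεle ε), Finset.sum_filter]
    have hrw : ∀ ε ∈ E.powerset, (-1:ℝ)^ε.card * h ε
        = ∑ j ∈ Finset.range ((t+1)^d),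
            if ∀ r, digit d t j r ≤ σε ε r then (-1:ℝ)^ε.card * coef d t 1 f j else 0 := by
      intro ε _
      rw [hlat ε, Finset.mul_sum]
      exact Finset.sum_congr rfl (fun j _ => by split_ifs <;> simp
        )
    rw [Finset.sum_congr rfl hrw, Finset.sum_comm, Finset.sum_filter]
    apply Finset.sum_congr rfl
    intro j _
    by_cases hP1 : ∀ r, digit d t j r ≤ σ r
    · -- inner alternating sum
      set Tj : Finset (Fin d) := E.filter (fun r => digit d t j r < σ r) with hTj
      have hcond : ∀ ε ∈ E.powerset, ((∀ r, digit d t j r ≤ σε ε r) ↔ ε ⊆ Tj) := by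
        intro ε hε
        have hεE : ε ⊆ E := Finset.mem_powerset.mp hε
        constructor
        · intro hc r hr
          rw [hTj, Finset.mem_filter]
          refine ⟨hεE hr, ?_⟩
          have := hc r
          have h1 : σε ε r = σ r - 1 := by simp only [hσε, if_pos hr]
          have h2 : 1 ≤ σ r := hσ1 r (hεE hr)
          omega
        · intro hc r
          by_cases hrε : r ∈ ε
          · have := Finset.mem_filter.mp (hTj ▸ hc hrε)
            have h1 : σε ε r = σ r - 1 := by simp only [hσε, if_pos hrε]
            omega
          · have h1 : σε ε r = σ r := by simp only [hσε, if_neg hrε]; omega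
            rw [h1]; exact hP1 r
      have hTjE : Tj ⊆ E := Finset.filter_subset _ _
      have hsplit : (∑ ε ∈ E.powerset,
          if ∀ r, digit d t j r ≤ σε ε r then (-1:ℝ)^ε.card * coef d t 1 f j else 0)
          = ∑ ε ∈ Tj.powerset, (-1:ℝ)^ε.card * coef d t 1 f j := by
        rw [← Finset.sum_filter]
        apply Finset.sum_congr ?_ (fun _ _ => rfl)
        ext ε
        simp only [Finset.mem_filter, Finset.mem_powerset]
        constructor
        · rintro ⟨h1, h2⟩; exact (hcond ε (Finset.mem_powerset.mpr h1)).mp h2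
        · intro h1
          have hεE : ε ⊆ E := h1.trans hTjE
          exact ⟨hεE, (hcond ε (Finset.mem_powerset.mpr hεE)).mpr h1⟩
      rw [hsplit, ← Finset.sum_mul, neg_one_pow_powerset]
      by_cases hTje : Tj = ∅
      · rw [if_pos hTje, one_mul, if_pos]
        refine ⟨hP1, fun r hrE => ?_⟩
        have h5 : r ∉ Tj := by rw [hTje]; exact Finset.notMem_empty r
        rw [hTj, Finset.mem_filter] at h5
        have h6 : ¬ digit d t j r < σ r := fun hlt => h5 ⟨hrE, hlt⟩
        have := hP1 r
        omega
      · rw [if_neg hTje, zero_mul, if_neg]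
        rintro ⟨-, hQ⟩
        apply hTje
        rw [hTj, Finset.filter_eq_empty_iff]
        intro r hrE
        have := hQ r hrE
        omega
    · rw [if_neg (fun hc => hP1 hc.1)]
      symm
      apply Finset.sum_eq_zero
      intro ε _
      rw [if_neg]
      intro hc
      exact hP1 (fun r => le_trans (hc r) (Nat.sub_le _ _))
  -- Step 2: pairing bound
  obtain ⟨r0, hr0⟩ := hE
  set E' := E.erase r0 with hE'
  have hr0E' : r0 ∉ E' := Finset.notMem_erase r0 E
  have hEins : E = insert r0 E' := (Finset.insert_erase hr0).symm
  have hcardE' : E'.card ≤ d - 1 := by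
    have h1 : E.card ≤ d := by simpa using Finset.card_le_univ E
    have h2 : E'.card = E.card - 1 := Finset.card_erase_of_mem hr0
    have h3 : 1 ≤ E.card := Finset.card_pos.mpr ⟨r0, hr0⟩
    omega
  have hdisj : Disjoint E'.powerset (E'.powerset.image (insert r0)) := by
    rw [Finset.disjoint_left]
    intro ε hε hε2
    obtain ⟨a, _, rfl⟩ := Finset.mem_image.mp hε2
    exact hr0E' (Finset.mem_powerset.mp hε (Finset.mem_insert_self r0 a))
  have hinj : ∀ a ∈ E'.powerset, ∀ b ∈ E'.powerset, insert r0 a = insert r0 b → a = b := by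
    intro a ha b hb hab
    have ha' : r0 ∉ a := fun hc => hr0E' (Finset.mem_powerset.mp ha hc)
    have hb' : r0 ∉ b := fun hc => hr0E' (Finset.mem_powerset.mp hb hc)
    rw [← Finset.erase_insert ha', ← Finset.erase_insert hb', hab]
  rw [hid, hEins, Finset.powerset_insert, Finset.sum_union hdisj, Finset.sum_image hinj,
    ← Finset.sum_add_distrib]
  have hbound : ∀ ε ∈ E'.powerset,
      |(-1:ℝ)^ε.card * h ε + (-1:ℝ)^(insert r0 ε).card * h (insert r0 ε)| ≤ ρ := by
    intro ε hε
    have hr0ε : r0 ∉ ε := fun hc => hr0E' (Finset.mem_powerset.mp hε hc)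
    rw [Finset.card_insert_of_notMem hr0ε]
    have hfact : (-1:ℝ)^ε.card * h ε + (-1:ℝ)^(ε.card+1) * h (insert r0 ε)
        = (-1:ℝ)^ε.card * (h ε - h (insert r0 ε)) := by rw [pow_succ]; ring
    rw [hfact, abs_mul, abs_pow, abs_neg, abs_one, one_pow, one_mul]
    set a := gridPt d t (vOf d t (σε ε)) with hadef
    set b := gridPt d t (vOf d t (σε (insert r0 ε))) with hbdef
    have hdiff : h ε - h (insert r0 ε) = (t:ℝ) * (f a - f b) := by simp only [hh]; ring
    have hfab : |f a - f b| ≤ ρ * ∑ r : Fin d, |a r - b r| :=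
      hf a (gridPt_mem d t ht _) b (gridPt_mem d t ht _)
    have har : ∀ r, a r = (σε ε r : ℝ) / t := by
      intro r
      rw [hadef]
      unfold gridPt
      rw [digit_vOf d t _ (hσεle ε) r]
    have hbr : ∀ r, b r = (σε (insert r0 ε) r : ℝ) / t := by
      intro r
      rw [hbdef]
      unfold gridPt
      rw [digit_vOf d t _ (hσεle _) r]
    have hsum1 : (∑ r : Fin d, |a r - b r|) = 1 / t := by
      rw [Finset.sum_eq_single_of_mem r0 (Finset.mem_univ r0)]
      · rw [har, hbr]
        have h1 : σε ε r0 = σ r0 := by simp only [hσε, if_neg hr0ε]; omega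
        have h2 : σε (insert r0 ε) r0 = σ r0 - 1 := by
          simp only [hσε, if_pos (Finset.mem_insert_self r0 ε)]
        rw [h1, h2]
        have h3 : 1 ≤ σ r0 := hσ1 r0 hr0
        have h4 : ((σ r0 - 1 : ℕ) : ℝ) = (σ r0 : ℝ) - 1 := by
          push_cast [h3]; ring
        rw [h4]
        rw [show (σ r0 : ℝ)/t - ((σ r0 : ℝ) - 1)/t = 1/t by ring]
        rw [abs_of_pos (by positivity)]
      · intro r _ hne
        rw [har, hbr]
        have hmem : (if r ∈ insert r0 ε then (1:ℕ) else 0) = (if r ∈ ε then 1 else 0) := by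
          simp [Finset.mem_insert, hne]
        have heq : σε (insert r0 ε) r = σε ε r := by
          simp only [hσε]; rw [hmem]
        rw [heq, sub_self, abs_zero]
    rw [hdiff, abs_mul, abs_of_pos htp]
    rw [hsum1] at hfab
    calc (t:ℝ) * |f a - f b| ≤ (t:ℝ) * (ρ * (1/t)) := by
          apply mul_le_mul_of_nonneg_left hfab (le_of_lt htp)
      _ = ρ := by field_simp
  calc |∑ ε ∈ E'.powerset,
        ((-1:ℝ)^ε.card * h ε + (-1:ℝ)^(insert r0 ε).card * h (insert r0 ε))|
      ≤ ∑ ε ∈ E'.powerset,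
        |(-1:ℝ)^ε.card * h ε + (-1:ℝ)^(insert r0 ε).card * h (insert r0 ε)| :=
        Finset.abs_sum_le_sum_abs _ _
    _ ≤ ∑ ε ∈ E'.powerset, ρ := Finset.sum_le_sum hbound
    _ = (2^E'.card : ℕ) * ρ := by rw [Finset.sum_const, Finset.card_powerset]; simp
    _ ≤ 2^(d-1) * ρ := by
        apply mul_le_mul_of_nonneg_right _ hρ
        have : (2:ℝ)^E'.card ≤ (2:ℝ)^(d-1) :=
          pow_le_pow_right₀ (by norm_num) hcardE'
        push_cast
        exact this

/-- The cell `C*_i = {x : π^i_r/t ≤ x_r ≤ π^i_r/t + 1/t ∀r}`. -/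
def cellStar (d t i : ℕ) : Set (Fin d → ℝ) :=
  {x | ∀ r : Fin d, gridPt d t i r ≤ x r ∧ x r ≤ gridPt d t i r + 1 / t}

/-- The inner cell `C_i = {x : π^i_r/t ≤ x_r ≤ π^i_r/t + 1/t − 1/(Mt) ∀r}`. -/
def cellInner (d t : ℕ) (M : ℝ) (i : ℕ) : Set (Fin d → ℝ) :=
  {x | ∀ r : Fin d, gridPt d t i r ≤ x r ∧ x r ≤ gridPt d t i r + (1 / t - 1 / (M * t))}

/-- The boundary region `C'_i = C*_i \ C_i`. -/
def cellBoundary (d t : ℕ) (M : ℝ) (i : ℕ) : Set (Fin d → ℝ) :=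
  cellStar d t i \ cellInner d t M i


/-- For d ≤ 3, f : [0,1]^d → ℝ ρ-Lipschitz in 1-norm, t ≥ 1 and M = 1,
the constructed network satisfies sup_{x ∈ [0,1]^d} |f(x) − f̂(x)| ≤ 37ρd/t. -/
theorem stmt_1 (d t : ℕ) (hd : 1 ≤ d) (hd3 : d ≤ 3) (ht : 1 ≤ t) (ρ : ℝ) (hρ : 0 ≤ ρ)
    (f : (Fin d → ℝ) → ℝ) (hf : LipOneNorm d ρ (Set.Icc 0 1) f) :
    ∀ x ∈ Set.Icc (0 : Fin d → ℝ) 1, |f x - fHat d t 1 f x| ≤ 37 * ρ * d / t := by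
  classical
  intro x hx
  have htp : (0:ℝ) < t := by exact_mod_cast ht
  have hk : 1 ≤ (t+1)^d := Nat.one_le_pow d (t+1) (by omega)
  have hx0 : ∀ r, (0:ℝ) ≤ x r := fun r => by
    have := hx.1; rw [Pi.le_def] at this; simpa using this r
  have hx1 : ∀ r, x r ≤ 1 := fun r => by
    have := hx.2; rw [Pi.le_def] at this; simpa using this r
  set π : Fin d → ℕ := fun r => min (⌊(t:ℝ) * x r⌋₊) (t-1) with hπ
  have hπt : ∀ r, π r ≤ t - 1 := fun r => min_le_right _ _
  have hπt' : ∀ r, π r ≤ t := fun r => le_trans (hπt r) (Nat.sub_le t 1)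
  have hlow : ∀ r, (π r : ℝ) ≤ t * x r := by
    intro r
    have h1 : (π r : ℕ) ≤ ⌊(t:ℝ) * x r⌋₊ := min_le_left _ _
    have h2 : (⌊(t:ℝ) * x r⌋₊ : ℝ) ≤ t * x r := Nat.floor_le (by have := hx0 r; positivity)
    calc (π r : ℝ) ≤ (⌊(t:ℝ) * x r⌋₊ : ℝ) := by exact_mod_cast h1
      _ ≤ _ := h2
  have hup : ∀ r, (t:ℝ) * x r ≤ π r + 1 := by
    intro r
    rcases le_or_gt (⌊(t:ℝ) * x r⌋₊) (t-1) with hc | hc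
    · have hπr : π r = ⌊(t:ℝ) * x r⌋₊ := min_eq_left hc
      rw [hπr]
      exact le_of_lt (Nat.lt_floor_add_one _)
    · have hπr : π r = t - 1 := min_eq_right (le_of_lt hc)
      rw [hπr]
      have h1 : (t:ℝ) * x r ≤ t := by nlinarith [hx1 r]
      have h2 : ((t - 1:ℕ):ℝ) + 1 = (t:ℝ) := by
        have h3 : (1:ℕ) ≤ t := ht
        push_cast [h3]
        ring
      rw [h2]; exact h1
  set i0 := vOf d t π with hi0
  have hi0lt : i0 < (t+1)^d := vOf_lt d t π hπt'
  set g : Fin d → ℝ := gridPt d t i0 with hg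
  have hdg : ∀ r, digit d t i0 r = π r := digit_vOf d t π hπt'
  have hgr : ∀ r, g r = (π r : ℝ) / t := by
    intro r; rw [hg]; unfold gridPt; rw [hdg r]
  have hgx : ∀ r, g r ≤ x r := by
    intro r; rw [hgr r, div_le_iff₀ htp]
    nlinarith [hlow r]
  have hxg : ∀ r, x r ≤ g r + 1/t := by
    intro r
    rw [hgr r]
    have h1 : x r ≤ ((π r:ℝ)+1)/t := by rw [le_div_iff₀ htp]; nlinarith [hup r]
    calc x r ≤ ((π r:ℝ)+1)/t := h1
      _ = (π r:ℝ)/t + 1/t := by ring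
  have hfg : fHat d t 1 f g = f g := interp d t ht f i0 hi0lt
  -- grid coordinates of unit j vs g and x
  have hgridle : ∀ j : ℕ, ∀ r : Fin d, digit d t j r ≤ π r → gridPt d t j r ≤ g r := by
    intro j r hle
    rw [hgr r]
    unfold gridPt
    have : (digit d t j r : ℝ) ≤ (π r : ℝ) := by exact_mod_cast hle
    exact div_le_div_of_nonneg_right' this
  have hgap : ∀ j : ℕ, ∀ r : Fin d, π r + 1 ≤ digit d t j r → g r + 1/t ≤ gridPt d t j r := by
    intro j r hle
    rw [hgr r]
    unfold gridPt
    have h1 : (π r : ℝ) + 1 ≤ (digit d t j r : ℝ) := by exact_mod_cast hle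
    calc (π r:ℝ)/t + 1/t = ((π r:ℝ)+1)/t := by ring
      _ ≤ (digit d t j r : ℝ)/t := div_le_div_of_nonneg_right' h1
  have hgapx : ∀ j : ℕ, ∀ r : Fin d, π r + 2 ≤ digit d t j r → x r + 1/t ≤ gridPt d t j r := by
    intro j r hle
    unfold gridPt
    have h1 : (π r : ℝ) + 2 ≤ (digit d t j r : ℝ) := by exact_mod_cast hle
    have h2 : ((π r:ℝ)+2)/t ≤ (digit d t j r : ℝ)/t := div_le_div_of_nonneg_right' h1
    have h3 : x r + 1/t ≤ ((π r:ℝ)+2)/t := by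
      have := hxg r
      rw [hgr r] at this
      calc x r + 1/t ≤ ((π r:ℝ)/t + 1/t) + 1/t := by linarith
        _ = ((π r:ℝ)+2)/t := by ring
    linarith
  -- expansion of the difference
  have hexp : fHat d t 1 f x - fHat d t 1 f g
      = ∑ j ∈ Finset.Icc 1 ((t+1)^d - 1), coef d t 1 f j * (phi d t j x - phi d t j g) := by
    unfold fHat gHat
    simp only [gUnit_one]
    rw [show ∀ a b c : ℝ, a + b - (a + c) = b - c from fun a b c => by ring]
    rw [← Finset.sum_sub_distrib]
    exact Finset.sum_congr rfl (fun j _ => by ring)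
  set D := (Finset.Icc 1 ((t+1)^d - 1)).filter
      (fun j => (∀ r, digit d t j r ≤ π r + 1) ∧ ¬(∀ r, digit d t j r ≤ π r)) with hD
  have hvanish : ∀ j ∈ Finset.Icc 1 ((t+1)^d - 1), j ∉ D →
      coef d t 1 f j * (phi d t j x - phi d t j g) = 0 := by
    intro j hj hjD
    rw [hD, Finset.mem_filter, not_and_or] at hjD
    rcases hjD with hjD | hjD
    · exact (hjD hj).elim
    · rw [not_and_or] at hjD
      rcases hjD with hjD | hjD
      · push_neg at hjD
        obtain ⟨r0, hr0⟩ := hjD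
        rw [phi_eq_zero d t j x r0 (hgapx j r0 (by omega)),
            phi_eq_zero d t j g r0 (hgap j r0 (by omega))]
        ring
      · rw [not_not] at hjD
        rw [phi_eq_full d t j x (fun r => le_trans (hgridle j r (hjD r)) (hgx r)),
            phi_eq_full d t j g (fun r => hgridle j r (hjD r))]
        ring
  have hres : (∑ j ∈ Finset.Icc 1 ((t+1)^d - 1),
      coef d t 1 f j * (phi d t j x - phi d t j g))
      = ∑ j ∈ D, coef d t 1 f j * phi d t j x := by
    calc (∑ j ∈ Finset.Icc 1 ((t+1)^d - 1),
        coef d t 1 f j * (phi d t j x - phi d t j g))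
        = ∑ j ∈ D, coef d t 1 f j * (phi d t j x - phi d t j g) :=
          (Finset.sum_subset (hD ▸ Finset.filter_subset _ _) hvanish).symm
      _ = ∑ j ∈ D, coef d t 1 f j * phi d t j x := by
          apply Finset.sum_congr rfl
          intro j hj
          have hj2 := (Finset.mem_filter.mp (hD ▸ hj)).2
          obtain ⟨r0, hr0⟩ : ∃ r, π r + 1 ≤ digit d t j r := by
            have h5 := hj2.2; push_neg at h5
            obtain ⟨r, hr⟩ := h5; exact ⟨r, by omega⟩
          rw [phi_eq_zero d t j g r0 (hgap j r0 hr0)]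
          ring
  -- fiber decomposition
  set Emap : ℕ → Finset (Fin d) :=
    fun j => Finset.univ.filter (fun r => digit d t j r = π r + 1) with hEmap
  have hfib : (∑ E ∈ (Finset.univ : Finset (Fin d)).powerset,
      ∑ j ∈ D.filter (fun j => Emap j = E), coef d t 1 f j * phi d t j x)
      = ∑ j ∈ D, coef d t 1 f j * phi d t j x :=
    Finset.sum_fiberwise_of_maps_to
      (fun j _ => Finset.mem_powerset.mpr (Finset.subset_univ _)) _
  have hEbound : ∀ E ∈ (Finset.univ : Finset (Fin d)).powerset,
      |∑ j ∈ D.filter (fun j => Emap j = E), coef d t 1 f j * phi d t j x|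
        ≤ 2^(d-1) * ρ * (1/t) := by
    intro E _
    by_cases hEe : E = ∅
    · have hempty : D.filter (fun j => Emap j = E) = ∅ := by
        rw [Finset.filter_eq_empty_iff]
        intro j hj hEj
        have hj2 := (Finset.mem_filter.mp (hD ▸ hj)).2
        obtain ⟨r0, hr0⟩ : ∃ r, π r + 1 ≤ digit d t j r := by
          have h5 := hj2.2; push_neg at h5
          obtain ⟨r, hr⟩ := h5; exact ⟨r, by omega⟩
        have hr0' : digit d t j r0 = π r0 + 1 := by
          have := hj2.1 r0; omega
        have : r0 ∈ Emap j := by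
          rw [hEmap]; exact Finset.mem_filter.mpr ⟨Finset.mem_univ r0, hr0'⟩
        rw [hEj, hEe] at this
        exact Finset.notMem_empty r0 this
      rw [hempty, Finset.sum_empty, abs_zero]
      positivity
    · -- nonempty E
      set σE : Fin d → ℕ := fun r => if r ∈ E then π r + 1 else π r with hσE
      have hσEt : ∀ r, σE r ≤ t := by
        intro r
        simp only [hσE]
        split_ifs
        · have := hπt r; omega
        · exact hπt' r
      have hσE1 : ∀ r ∈ E, 1 ≤ σE r := by
        intro r hr; simp only [hσE]; rw [if_pos hr]; omega
      have hEne : E.Nonempty := Finset.nonempty_iff_ne_empty.mpr hEe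
      -- the fiber equals the index set of keyL
      have hEq : D.filter (fun j => Emap j = E)
          = (Finset.range ((t+1)^d)).filter
              (fun j => (∀ r, digit d t j r ≤ σE r) ∧ ∀ r ∈ E, digit d t j r = σE r) := by
        ext j
        simp only [Finset.mem_filter, Finset.mem_range, hD, Finset.mem_Icc]
        constructor
        · rintro ⟨⟨⟨hj1, hj2⟩, hA, hB⟩, hEj⟩
          refine ⟨by omega, fun r => ?_, fun r hr => ?_⟩
          · simp only [hσE]
            split_ifs with hrE
            · exact hA r
            · have : r ∉ Emap j := by rw [hEj]; exact hrE
              rw [hEmap, Finset.mem_filter] at this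
              have h6 : ¬ digit d t j r = π r + 1 := fun hc => this ⟨Finset.mem_univ r, hc⟩
              have := hA r; omega
          · have : r ∈ Emap j := by rw [hEj]; exact hr
            rw [hEmap, Finset.mem_filter] at this
            simp only [hσE]; rw [if_pos hr]
            exact this.2
        · rintro ⟨hjk, hA, hB⟩
          obtain ⟨r1, hr1⟩ := hEne
          have hB1 := hB r1 hr1
          simp only [hσE] at hB1; rw [if_pos hr1] at hB1
          have hj1 : 1 ≤ j := by
            rcases Nat.eq_zero_or_pos j with h0 | h0
            · subst h0; rw [digit_zero] at hB1; omega
            · exact h0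
          refine ⟨⟨⟨hj1, by omega⟩, fun r => ?_, fun hc => ?_⟩, ?_⟩
          · have := hA r
            simp only [hσE] at this
            split_ifs at this <;> omega
          · have := hc r1; omega
          · rw [hEmap]
            ext r
            simp only [Finset.mem_filter, Finset.mem_univ, true_and]
            constructor
            · intro hdr
              by_contra hrE
              have := hA r
              simp only [hσE] at this; rw [if_neg hrE] at this
              omega
            · intro hr
              have := hB r hr
              simp only [hσE] at this; rw [if_pos hr] at this
              exact this
      -- common phi value on the fiber
      set vE : ℝ := relu ((∑ r : Fin d, -(1:ℝ) * relu (-(x r) + (σE r : ℝ)/t)) + 1/t)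
        with hvE
      have hphiv : ∀ j ∈ D.filter (fun j => Emap j = E), phi d t j x = vE := by
        intro j hj
        rw [hEq] at hj
        obtain ⟨hjk, hA, hB⟩ := Finset.mem_filter.mp hj
        rw [hvE]
        unfold phi
        congr 1
        apply congrArg (· + 1/(t:ℝ))
        apply Finset.sum_congr rfl
        intro r _
        by_cases hrE : r ∈ E
        · have := hB r hrE
          unfold gridPt
          rw [this]
        · have h7 : digit d t j r ≤ π r := by
            have := hA r; simp only [hσE] at this; rw [if_neg hrE] at this; exact this
          have h8 : gridPt d t j r ≤ x r := le_trans (hgridle j r h7) (hgx r)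
          have h9 : (σE r : ℝ)/t ≤ x r := by
            simp only [hσE]; rw [if_neg hrE]
            have := hgx r; rw [hgr r] at this; exact this
          rw [relu_of_nonpos (by linarith), relu_of_nonpos (by linarith)]
      have hvE0 : 0 ≤ vE := relu_nonneg _
      have hvE1 : vE ≤ 1/t := by
        rw [hvE]
        apply relu_le_of_le (by positivity)
        have hs : (∑ r : Fin d, -(1:ℝ) * relu (-(x r) + (σE r : ℝ)/t)) ≤ 0 :=
          Finset.sum_nonpos (fun r _ => by
            have := relu_nonneg (-(x r) + (σE r : ℝ)/t); nlinarith)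
        linarith
      have hfacv : (∑ j ∈ D.filter (fun j => Emap j = E), coef d t 1 f j * phi d t j x)
          = (∑ j ∈ (Finset.range ((t+1)^d)).filter
              (fun j => (∀ r, digit d t j r ≤ σE r) ∧ ∀ r ∈ E, digit d t j r = σE r),
            coef d t 1 f j) * vE := by
        rw [← hEq, Finset.sum_mul]
        exact Finset.sum_congr rfl (fun j hj => by rw [hphiv j hj])
      rw [hfacv, abs_mul, abs_of_nonneg hvE0]
      have hkey := keyL d t ht ρ hρ f hf σE hσEt E hEne hσE1
      calc |∑ j ∈ (Finset.range ((t+1)^d)).filter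
              (fun j => (∀ r, digit d t j r ≤ σE r) ∧ ∀ r ∈ E, digit d t j r = σE r),
            coef d t 1 f j| * vE
          ≤ (2^(d-1) * ρ) * (1/t) := by
            apply mul_le_mul hkey hvE1 hvE0 (by positivity)
        _ = 2^(d-1) * ρ * (1/t) := by ring
  -- assemble
  have hterm2 : |fHat d t 1 f x - fHat d t 1 f g| ≤ 2^d * (2^(d-1) * ρ * (1/t)) := by
    rw [hexp, hres, ← hfib]
    calc |∑ E ∈ (Finset.univ : Finset (Fin d)).powerset,
        ∑ j ∈ D.filter (fun j => Emap j = E), coef d t 1 f j * phi d t j x|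
        ≤ ∑ E ∈ (Finset.univ : Finset (Fin d)).powerset,
          |∑ j ∈ D.filter (fun j => Emap j = E), coef d t 1 f j * phi d t j x| :=
          Finset.abs_sum_le_sum_abs _ _
      _ ≤ ∑ E ∈ (Finset.univ : Finset (Fin d)).powerset, 2^(d-1) * ρ * (1/t) :=
          Finset.sum_le_sum hEbound
      _ = ((Finset.univ : Finset (Fin d)).powerset.card : ℝ) * (2^(d-1) * ρ * (1/t)) := by
          rw [Finset.sum_const]; simp [nsmul_eq_mul]
      _ = 2^d * (2^(d-1) * ρ * (1/t)) := by
          rw [Finset.card_powerset, Finset.card_univ, Fintype.card_fin]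
          push_cast
          ring
  have hterm1 : |f x - f g| ≤ ρ * (d * (1/t)) := by
    have h1 := hf x hx g (gridPt_mem d t ht i0)
    have h2 : (∑ r : Fin d, |x r - g r|) ≤ d * (1/t) := by
      calc (∑ r : Fin d, |x r - g r|) ≤ ∑ r : Fin d, 1/(t:ℝ) := by
            apply Finset.sum_le_sum
            intro r _
            rw [abs_of_nonneg (by have := hgx r; linarith)]
            have := hxg r; linarith
        _ = d * (1/t) := by rw [Finset.sum_const, Finset.card_univ, Fintype.card_fin]; simp [nsmul_eq_mul]
    calc |f x - f g| ≤ ρ * ∑ r : Fin d, |x r - g r| := h1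
      _ ≤ ρ * (d * (1/t)) := by nlinarith
  have hcomb : |f x - fHat d t 1 f x| ≤ ρ * (d * (1/t)) + 2^d * (2^(d-1) * ρ * (1/t)) := by
    have h3 : f x - fHat d t 1 f x = (f x - f g) - (fHat d t 1 f x - fHat d t 1 f g) := by
      rw [hfg]; ring
    rw [h3]
    calc |(f x - f g) - (fHat d t 1 f x - fHat d t 1 f g)|
        ≤ |f x - f g| + |fHat d t 1 f x - fHat d t 1 f g| := abs_sub _ _
      _ ≤ ρ * (d * (1/t)) + 2^d * (2^(d-1) * ρ * (1/t)) := add_le_add hterm1 hterm2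
  refine le_trans hcomb ?_
  have hdd : (1:ℝ) ≤ (d:ℝ) := by exact_mod_cast hd
  have hpow : (2:ℝ)^d * 2^(d-1) ≤ 32 := by
    have h8 : (2:ℝ)^d ≤ 8 := by
      calc (2:ℝ)^d ≤ 2^3 := pow_le_pow_right₀ (by norm_num) hd3
        _ = 8 := by norm_num
    have h4 : (2:ℝ)^(d-1) ≤ 4 := by
      calc (2:ℝ)^(d-1) ≤ 2^2 := pow_le_pow_right₀ (by norm_num) (by omega)
        _ = 4 := by norm_num
    have hnn : (0:ℝ) ≤ 2^(d-1) := by positivity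
    nlinarith [pow_nonneg (by norm_num : (0:ℝ) ≤ 2) d]
  have hre : ρ * ((d:ℝ) * (1/(t:ℝ))) + 2^d * (2^(d-1) * ρ * (1/(t:ℝ)))
      = (ρ * d + 2^d * 2^(d-1) * ρ) * ((t:ℝ))⁻¹ := by
    field_simp
  have hre2 : 37 * ρ * (d:ℝ) / (t:ℝ) = (37 * ρ * d) * ((t:ℝ))⁻¹ := by
    rw [div_eq_mul_inv]
  rw [hre, hre2]
  apply mul_le_mul_of_nonneg_right _ (by positivity)
  nlinarith [mul_nonneg hρ (sub_nonneg.mpr hdd), mul_le_mul_of_nonneg_left hpow hρ]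

end
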